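/- Under the support assumption, the stationary-distribution importance sampling identity holds: J(π_e) = E_{τ∼p_{π_b}}[Σ_{t=1}^L γ^{t−1} (d^{π_e}(S_t,A_t)/d^{π_b}(S_t,A_t)) R_t], where the ratio is well defined p_{π_b}-almost surely since d^{π_b}(S_t,A_t) > 0 almost surely. -/

import Mathlib

/-!
Summing out the steps after time `t` (the weights `d1`, `T`, `π` of each step sum to one) gives
`E_π[g(S_t, A_t)] = ∑_{s,a} d_t^π(s,a) g(s,a)`. Hence both sides of the identity are sums over
`(s,a)` of `r(s,a)` times the discounted occupancy `∑_t γ^t d_t(s,a)`: of `π_e` on the left, of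
`π_b` multiplied by the ratio `d^{π_e}(s,a)/d^{π_b}(s,a)` on the right. The normalizing constants
in the ratio cancel, so the ratio turns the `π_b` occupancy into the `π_e` one wherever the former
is nonzero; where it vanishes so does the `π_e` occupancy, because under the support assumption
every trajectory prefix of probability zero under `π_b` has probability zero under `π_e`.
-/

open Finset

variable {S A : Type*} [Fintype S] [Fintype A] [DecidableEq S] [DecidableEq A]
  [Inhabited S] [Inhabited A]

/-- Weight contributed by the `t`-th step of trajectory `τ` under initial
distribution `d1`, transition kernel `T` and policy `π` (`π s a = π(a|s)`,
`T s a s' = T(s'|s,a)`). -/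
noncomputable def stepW (d1 : S → ℝ) (T : S → A → S → ℝ) (π : S → A → ℝ)
    (τ : ℕ → S × A) : ℕ → ℝ
  | 0 => d1 (τ 0).1 * π (τ 0).1 (τ 0).2
  | t + 1 => T (τ t).1 (τ t).2 (τ (t + 1)).1 * π (τ (t + 1)).1 (τ (t + 1)).2

/-- Probability under `p_π` of the first `n` steps (times `0, …, n-1`) of `τ`. -/
noncomputable def preP (d1 : S → ℝ) (T : S → A → S → ℝ) (π : S → A → ℝ)
    (n : ℕ) (τ : ℕ → S × A) : ℝ :=
  ∏ t ∈ range n, stepW d1 T π τ t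

/-- Extension of a length-`n` prefix to an infinite trajectory. -/
def extTraj {n : ℕ} (σ : Fin n → S × A) : ℕ → S × A :=
  fun t => if h : t < n then σ ⟨t, h⟩ else default

/-- Expectation under `p_π` of a function depending only on the first `n` steps
of the trajectory. -/
noncomputable def expVal (d1 : S → ℝ) (T : S → A → S → ℝ) (π : S → A → ℝ)
    (n : ℕ) (f : (ℕ → S × A) → ℝ) : ℝ :=
  ∑ σ : Fin n → S × A, preP d1 T π n (extTraj σ) * f (extTraj σ)

/-- `d_t^π(s,a)`, the time-`t` state-action distribution (time is 0-indexed,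
so `t = 0` is the paper's time `1`). -/
noncomputable def dSA (d1 : S → ℝ) (T : S → A → S → ℝ) (π : S → A → ℝ)
    (t : ℕ) (s : S) (a : A) : ℝ :=
  expVal d1 T π (t + 1) (fun τ => if τ t = (s, a) then 1 else 0)

/-- Single-step likelihood ratio `ρ_t = π_e(A_t|S_t)/π_b(A_t|S_t)`
(0-indexed time). -/
noncomputable def rho (πb πe : S → A → ℝ) (τ : ℕ → S × A) (t : ℕ) : ℝ :=
  πe (τ t).1 (τ t).2 / πb (τ t).1 (τ t).2

/-- Conditional expectation under `p_π` given `(S_t, A_t) = (s, a)`, for a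
function of the first `n` steps. -/
noncomputable def condExpSA (d1 : S → ℝ) (T : S → A → S → ℝ) (π : S → A → ℝ)
    (n t : ℕ) (s : S) (a : A) (f : (ℕ → S × A) → ℝ) : ℝ :=
  expVal d1 T π n (fun τ => if τ t = (s, a) then f τ else 0) / dSA d1 T π t s a

/-- Averaged state-action distribution `d_{1:Th}^π` over the first `Th` steps
with discount `γ`. -/
noncomputable def dAvg (d1 : S → ℝ) (T : S → A → S → ℝ) (π : S → A → ℝ)
    (γ : ℝ) (Th : ℕ) (s : S) (a : A) : ℝ :=
  (∑ t ∈ range Th, γ ^ t * dSA d1 T π t s a) / (∑ t ∈ range Th, γ ^ t)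

/-- Discounted average state-action occupancy `d^π` (infinite horizon),
`d^π(s,a) = (1-γ) Σ_{t≥1} γ^{t-1} d_t^π(s,a)`. -/
noncomputable def dInf (d1 : S → ℝ) (T : S → A → S → ℝ) (π : S → A → ℝ)
    (γ : ℝ) (s : S) (a : A) : ℝ :=
  (1 - γ) * ∑' t : ℕ, γ ^ t * dSA d1 T π t s a

/-- Infinite-horizon value `J(π) = E_{p_π}[Σ_{t≥1} γ^{t-1} R_t]`. -/
noncomputable def Jinf (d1 : S → ℝ) (T : S → A → S → ℝ) (π : S → A → ℝ)
    (r : S → A → ℝ) (γ : ℝ) : ℝ :=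
  ∑' t : ℕ, γ ^ t * expVal d1 T π (t + 1) (fun τ => r (τ t).1 (τ t).2)

/-- Doubly-robust weight `w(m, n)` of the paper (`m` is the paper's 1-indexed
time, with `w(0, n) = 1`). -/
noncomputable def wDR (d1 : S → ℝ) (T : S → A → S → ℝ) (πb πe : S → A → ℝ)
    (γ : ℝ) (n : ℕ) (τ : ℕ → S × A) (m : ℕ) : ℝ :=
  if m = 0 then 1
  else if m ≤ n then ∏ j ∈ range m, rho πb πe τ j
  else (dInf d1 T πe γ (τ (m - n - 1)).1 (τ (m - n - 1)).2 /
        dInf d1 T πb γ (τ (m - n - 1)).1 (τ (m - n - 1)).2) *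
      ∏ j ∈ Icc (m - n) (m - 1), rho πb πe τ j

set_option linter.unusedSectionVars false

section Marginalization

variable {d1 : S → ℝ} {T : S → A → S → ℝ} {π : S → A → ℝ}

lemma extTraj_snoc_of_lt {n : ℕ} (σ : Fin n → S × A) (x : S × A) {t : ℕ} (ht : t < n) :
    extTraj (Fin.snoc σ x : Fin (n + 1) → S × A) t = extTraj σ t := by
  simp [extTraj, ht, Nat.lt_succ_of_lt ht, Fin.snoc]

lemma extTraj_snoc_self {n : ℕ} (σ : Fin n → S × A) (x : S × A) :
    extTraj (Fin.snoc σ x : Fin (n + 1) → S × A) n = x := by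
  simp [extTraj, Fin.snoc]

lemma stepW_congr {τ τ' : ℕ → S × A} {t : ℕ} (h : ∀ i ≤ t, τ i = τ' i) :
    stepW d1 T π τ t = stepW d1 T π τ' t := by
  cases t with
  | zero => simp only [stepW, h 0 le_rfl]
  | succ t => simp only [stepW, h t (Nat.le_succ t), h (t + 1) le_rfl]

lemma preP_congr {n : ℕ} {τ τ' : ℕ → S × A} (h : ∀ i < n, τ i = τ' i) :
    preP d1 T π n τ = preP d1 T π n τ' :=
  prod_congr rfl fun _ ht => stepW_congr fun i hi => h i (hi.trans_lt (mem_range.mp ht))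

lemma sum_stepW_snoc (hd1sum : ∑ s, d1 s = 1) (hTsum : ∀ s a, ∑ s', T s a s' = 1)
    (hπsum : ∀ s, ∑ a, π s a = 1) {n : ℕ} (σ : Fin n → S × A) :
    ∑ x : S × A, stepW d1 T π (extTraj (Fin.snoc σ x : Fin (n + 1) → S × A)) n = 1 := by
  cases n with
  | zero =>
    simp only [stepW, extTraj_snoc_self, Fintype.sum_prod_type, ← mul_sum, hπsum, mul_one,
      hd1sum]
  | succ m =>
    simp only [stepW, extTraj_snoc_self, extTraj_snoc_of_lt σ _ (Nat.lt_succ_self m),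
      Fintype.sum_prod_type, ← mul_sum, hπsum, mul_one, hTsum]

lemma expVal_succ (hd1sum : ∑ s, d1 s = 1) (hTsum : ∀ s a, ∑ s', T s a s' = 1)
    (hπsum : ∀ s, ∑ a, π s a = 1) {n : ℕ} {f : (ℕ → S × A) → ℝ}
    (hf : ∀ τ τ' : ℕ → S × A, (∀ i < n, τ i = τ' i) → f τ = f τ') :
    expVal d1 T π (n + 1) f = expVal d1 T π n f := by
  rw [expVal, ← (Fin.snocEquiv fun _ => S × A).sum_comp, Fintype.sum_prod_type_right, expVal]
  refine sum_congr rfl fun σ _ => ?_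
  have hagree (x : S × A) : ∀ i < n, extTraj (Fin.snoc σ x : Fin (n + 1) → S × A) i =
      extTraj σ i := fun i hi => extTraj_snoc_of_lt σ x hi
  calc ∑ x, preP d1 T π (n + 1) (extTraj (Fin.snoc σ x : Fin (n + 1) → S × A)) *
        f (extTraj (Fin.snoc σ x : Fin (n + 1) → S × A))
      = ∑ x, preP d1 T π n (extTraj σ) * f (extTraj σ) *
          stepW d1 T π (extTraj (Fin.snoc σ x : Fin (n + 1) → S × A)) n := by
        refine sum_congr rfl fun x _ => ?_
        rw [preP, prod_range_succ, ← preP, preP_congr (hagree x), hf _ _ (hagree x)]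
        ring
    _ = preP d1 T π n (extTraj σ) * f (extTraj σ) := by
        rw [← mul_sum, sum_stepW_snoc hd1sum hTsum hπsum, mul_one]

lemma expVal_comp_eval (hd1sum : ∑ s, d1 s = 1) (hTsum : ∀ s a, ∑ s', T s a s' = 1)
    (hπsum : ∀ s, ∑ a, π s a = 1) {n t : ℕ} (ht : t < n) (g : S × A → ℝ) :
    expVal d1 T π n (fun τ => g (τ t)) = ∑ p : S × A, dSA d1 T π t p.1 p.2 * g p := by
  have hlater : expVal d1 T π n (fun τ => g (τ t)) = expVal d1 T π (t + 1) (fun τ => g (τ t)) := by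
    induction n, ht using Nat.le_induction with
    | base => rfl
    | succ n hn ih =>
      rw [expVal_succ hd1sum hTsum hπsum fun τ τ' h => by rw [h t hn]]
      exact ih
  rw [hlater]
  simp only [dSA, expVal, sum_mul]
  rw [sum_comm]
  refine sum_congr rfl fun σ _ => ?_
  simp [ite_mul]

lemma expVal_sum {ι : Type*} (n : ℕ) (s : Finset ι) (f : ι → (ℕ → S × A) → ℝ) :
    expVal d1 T π n (fun τ => ∑ i ∈ s, f i τ) = ∑ i ∈ s, expVal d1 T π n (f i) := by
  simp only [expVal, mul_sum]
  exact sum_comm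

lemma expVal_sum_range_comp_eval (hd1sum : ∑ s, d1 s = 1) (hTsum : ∀ s a, ∑ s', T s a s' = 1)
    (hπsum : ∀ s, ∑ a, π s a = 1) (L : ℕ) (g : ℕ → S × A → ℝ) :
    expVal d1 T π L (fun τ => ∑ t ∈ range L, g t (τ t)) =
      ∑ p : S × A, ∑ t ∈ range L, dSA d1 T π t p.1 p.2 * g t p := by
  rw [expVal_sum, sum_comm]
  exact sum_congr rfl fun t ht => expVal_comp_eval hd1sum hTsum hπsum (mem_range.mp ht) _

end Marginalization

section Support

variable {d1 : S → ℝ} {T : S → A → S → ℝ} {π πb πe : S → A → ℝ}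

lemma stepW_nonneg (hd1 : ∀ s, 0 ≤ d1 s) (hT : ∀ s a s', 0 ≤ T s a s') (hπ : ∀ s a, 0 ≤ π s a)
    (τ : ℕ → S × A) (t : ℕ) : 0 ≤ stepW d1 T π τ t := by
  cases t with
  | zero => exact mul_nonneg (hd1 _) (hπ _ _)
  | succ t => exact mul_nonneg (hT _ _ _) (hπ _ _)

lemma preP_nonneg (hd1 : ∀ s, 0 ≤ d1 s) (hT : ∀ s a s', 0 ≤ T s a s') (hπ : ∀ s a, 0 ≤ π s a)
    (n : ℕ) (τ : ℕ → S × A) : 0 ≤ preP d1 T π n τ :=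
  prod_nonneg fun t _ => stepW_nonneg hd1 hT hπ τ t

lemma dSA_nonneg (hd1 : ∀ s, 0 ≤ d1 s) (hT : ∀ s a s', 0 ≤ T s a s') (hπ : ∀ s a, 0 ≤ π s a)
    (t : ℕ) (s : S) (a : A) : 0 ≤ dSA d1 T π t s a :=
  sum_nonneg fun _ _ => mul_nonneg (preP_nonneg hd1 hT hπ _ _) (by positivity)

lemma stepW_eq_zero_of_eq_zero (hπe : ∀ s a, 0 ≤ πe s a)
    (hsupp : ∀ s a, 0 < πe s a → 0 < πb s a) (τ : ℕ → S × A) (t : ℕ)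
    (h : stepW d1 T πb τ t = 0) : stepW d1 T πe τ t = 0 := by
  have hnull (s : S) (a : A) (hb : πb s a = 0) : πe s a = 0 :=
    (hπe s a).eq_or_lt.resolve_right (fun he => (hsupp s a he).ne' hb) |>.symm
  cases t <;>
  · simp only [stepW, mul_eq_zero] at h ⊢
    exact h.imp_right (hnull _ _)

lemma preP_eq_zero_of_eq_zero (hπe : ∀ s a, 0 ≤ πe s a)
    (hsupp : ∀ s a, 0 < πe s a → 0 < πb s a) (n : ℕ) (τ : ℕ → S × A)
    (h : preP d1 T πb n τ = 0) : preP d1 T πe n τ = 0 := by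
  obtain ⟨t, ht, h⟩ := prod_eq_zero_iff.mp h
  exact prod_eq_zero ht (stepW_eq_zero_of_eq_zero hπe hsupp τ t h)

lemma dSA_eq_zero_of_eq_zero (hd1 : ∀ s, 0 ≤ d1 s) (hT : ∀ s a s', 0 ≤ T s a s')
    (hπb : ∀ s a, 0 ≤ πb s a) (hπe : ∀ s a, 0 ≤ πe s a)
    (hsupp : ∀ s a, 0 < πe s a → 0 < πb s a) {t : ℕ} {s : S} {a : A}
    (h : dSA d1 T πb t s a = 0) : dSA d1 T πe t s a = 0 := by
  rw [dSA, expVal, sum_eq_zero_iff_of_nonneg fun _ _ =>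
    mul_nonneg (preP_nonneg hd1 hT hπb _ _) (by positivity)] at h
  refine sum_eq_zero fun σ hσ => ?_
  rcases mul_eq_zero.mp (h σ hσ) with h0 | h0
  · exact mul_eq_zero_of_left (preP_eq_zero_of_eq_zero hπe hsupp _ _ h0) _
  · exact mul_eq_zero_of_right _ h0

end Support

noncomputable def discountedOccupancy (d1 : S → ℝ) (T : S → A → S → ℝ) (π : S → A → ℝ)
    (γ : ℝ) (L : ℕ) (s : S) (a : A) : ℝ :=
  ∑ t ∈ range L, γ ^ t * dSA d1 T π t s a

section Occupancy

variable {d1 : S → ℝ} {T : S → A → S → ℝ} {πb πe : S → A → ℝ} {γ : ℝ}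

lemma discountedOccupancy_eq_zero_of_eq_zero (hd1 : ∀ s, 0 ≤ d1 s)
    (hT : ∀ s a s', 0 ≤ T s a s') (hπb : ∀ s a, 0 ≤ πb s a) (hπe : ∀ s a, 0 ≤ πe s a)
    (hsupp : ∀ s a, 0 < πe s a → 0 < πb s a) (hγ : 0 ≤ γ) {L : ℕ} {s : S} {a : A}
    (h : discountedOccupancy d1 T πb γ L s a = 0) : discountedOccupancy d1 T πe γ L s a = 0 := by
  rw [discountedOccupancy, sum_eq_zero_iff_of_nonneg fun t _ =>
    mul_nonneg (pow_nonneg hγ t) (dSA_nonneg hd1 hT hπb t s a)] at h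
  refine sum_eq_zero fun t ht => ?_
  rcases mul_eq_zero.mp (h t ht) with h0 | h0
  · rw [h0, zero_mul]
  · rw [dSA_eq_zero_of_eq_zero hd1 hT hπb hπe hsupp h0, mul_zero]

lemma discountedOccupancy_mul_dAvg_div_dAvg (hd1 : ∀ s, 0 ≤ d1 s)
    (hT : ∀ s a s', 0 ≤ T s a s') (hπb : ∀ s a, 0 ≤ πb s a) (hπe : ∀ s a, 0 ≤ πe s a)
    (hsupp : ∀ s a, 0 < πe s a → 0 < πb s a) (hγ : 0 ≤ γ) (L : ℕ) (s : S) (a : A) :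
    discountedOccupancy d1 T πb γ L s a * (dAvg d1 T πe γ L s a / dAvg d1 T πb γ L s a) =
      discountedOccupancy d1 T πe γ L s a := by
  rcases L.eq_zero_or_pos with rfl | hL
  · simp [discountedOccupancy]
  have hC : ∑ t ∈ range L, γ ^ t ≠ 0 :=
    (sum_pos' (fun t _ => pow_nonneg hγ t) ⟨0, mem_range.mpr hL, by simp⟩).ne'
  rw [dAvg, dAvg, div_div_div_cancel_right₀ hC]
  exact mul_div_cancel_of_imp'
    (discountedOccupancy_eq_zero_of_eq_zero hd1 hT hπb hπe hsupp hγ)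

end Occupancy

theorem sis_identity_general
    (d1 : S → ℝ) (T : S → A → S → ℝ) (πb πe : S → A → ℝ) (r : S → A → ℝ)
    (γ : ℝ) (L : ℕ)
    (hd1 : ∀ s, 0 ≤ d1 s) (hd1sum : ∑ s, d1 s = 1)
    (hT : ∀ s a s', 0 ≤ T s a s') (hTsum : ∀ s a, ∑ s', T s a s' = 1)
    (hπb : ∀ s a, 0 ≤ πb s a) (hπbsum : ∀ s, ∑ a, πb s a = 1)
    (hπe : ∀ s a, 0 ≤ πe s a) (hπesum : ∀ s, ∑ a, πe s a = 1)
    (hγ0 : 0 ≤ γ)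
    (hsupp : ∀ s a, 0 < πe s a → 0 < πb s a) :
    expVal d1 T πe L (fun τ => ∑ t ∈ range L, γ ^ t * r (τ t).1 (τ t).2)
      = expVal d1 T πb L (fun τ => ∑ t ∈ range L, γ ^ t *
          (dAvg d1 T πe γ L (τ t).1 (τ t).2 / dAvg d1 T πb γ L (τ t).1 (τ t).2) *
          r (τ t).1 (τ t).2) := by
  rw [expVal_sum_range_comp_eval hd1sum hTsum hπesum L fun t p => γ ^ t * r p.1 p.2,
    expVal_sum_range_comp_eval hd1sum hTsum hπbsum L fun t p =>
      γ ^ t * (dAvg d1 T πe γ L p.1 p.2 / dAvg d1 T πb γ L p.1 p.2) * r p.1 p.2]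
  refine sum_congr rfl fun p _ => ?_
  set w := dAvg d1 T πe γ L p.1 p.2 / dAvg d1 T πb γ L p.1 p.2
  calc ∑ t ∈ range L, dSA d1 T πe t p.1 p.2 * (γ ^ t * r p.1 p.2)
      = discountedOccupancy d1 T πe γ L p.1 p.2 * r p.1 p.2 := by
        rw [discountedOccupancy, sum_mul]
        exact sum_congr rfl fun _ _ => by ring
    _ = discountedOccupancy d1 T πb γ L p.1 p.2 * w * r p.1 p.2 := by
        rw [discountedOccupancy_mul_dAvg_div_dAvg hd1 hT hπb hπe hsupp hγ0]
    _ = ∑ t ∈ range L, dSA d1 T πb t p.1 p.2 * (γ ^ t * w * r p.1 p.2) := by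
        rw [discountedOccupancy, sum_mul, sum_mul]
        exact sum_congr rfl fun _ _ => by ring

/-- the stationary-distribution importance sampling identity:
`J(π_e) = E_{τ∼p_πb}[Σ_t γ^(t-1) (d^πe(S_t,A_t)/d^πb(S_t,A_t)) R_t]`. -/
theorem sis_identity
    (d1 : S → ℝ) (T : S → A → S → ℝ) (πb πe : S → A → ℝ) (r : S → A → ℝ)
    (γ : ℝ) (L : ℕ) (hL : 0 < L)
    (hd1 : ∀ s, 0 ≤ d1 s) (hd1sum : ∑ s, d1 s = 1)
    (hT : ∀ s a s', 0 ≤ T s a s') (hTsum : ∀ s a, ∑ s', T s a s' = 1)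
    (hπb : ∀ s a, 0 ≤ πb s a) (hπbsum : ∀ s, ∑ a, πb s a = 1)
    (hπe : ∀ s a, 0 ≤ πe s a) (hπesum : ∀ s, ∑ a, πe s a = 1)
    (hγ0 : 0 ≤ γ) (hγ1 : γ < 1)
    (hsupp : ∀ s a, 0 < πe s a → 0 < πb s a) :
    expVal d1 T πe L (fun τ => ∑ t ∈ range L, γ ^ t * r (τ t).1 (τ t).2)
      = expVal d1 T πb L (fun τ => ∑ t ∈ range L, γ ^ t *
          (dAvg d1 T πe γ L (τ t).1 (τ t).2 / dAvg d1 T πb γ L (τ t).1 (τ t).2) *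
          r (τ t).1 (τ t).2) :=
  sis_identity_general d1 T πb πe r γ L hd1 hd1sum hT hTsum hπb hπbsum hπe hπesum hγ0 hsupp
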